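/- Let H be a Hilbert space and let P be a rank-one orthogonal projection onto the span of a unit vector v. Let d and δ be bounded operators with d² = 0, δ = d*, and suppose Δ = dδ + δd satisfies Δv = 0 and Δ ≥ I on the orthogonal complement of v (i.e., ⟨Δx,x⟩ ≥ ‖x‖² whenever x ⟂ v). Then P + Δ is a positive invertible operator with P + Δ ≥ I, and setting F = (d + δ)(P + Δ)^{-1/2} one has F = F*, and F² = I − P·(P+Δ)⁻¹ = I − P. -/

import Mathlib

/-!
Put `A = d + δ`. Since `d² = 0`, `A² = Δ`, and `re ⟪Δ v, v⟫ = ‖A v‖²` forces `A v = 0`, so `A`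
annihilates the line `ℂ v` and `AP = PA = 0`. Splitting `x = P x + (1 - P) x` then gives
`⟪(P + Δ) x, x⟫ ≥ ‖x‖²`, i.e. `P + Δ ≥ 1`, so the spectrum of `T = P + Δ` lies in `[1, ∞)` and
`S = T^{-1/2}` satisfies `T S² = 1`. As `A` commutes with `T`, it commutes with `S`; hence `AS` is
self-adjoint and `(AS)² = A² S² = (T - P) S² = 1 - P`, because `P = PT` gives `P S² = P`.
-/

open ContinuousLinearMap RCLike
open scoped InnerProductSpace

theorem mul_self_eq_one_sub_of_commute {R : Type*} [Ring R] {a s t p : R} (has : Commute a s)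
    (haa : a * a = t - p) (hts : t * (s * s) = 1) (hpt : p * t = p) :
    (a * s) * (a * s) = 1 - p :=
  calc (a * s) * (a * s) = (a * a) * (s * s) := has.symm.mul_mul_mul_comm a s
    _ = 1 - p * (s * s) := by rw [haa, sub_mul, hts]
    _ = 1 - p := by nth_rw 1 [← hpt]; rw [mul_assoc, hts, mul_one]

theorem add_star_mul_self_of_mul_self_eq_zero {R : Type*} [NonUnitalRing R] [StarRing R] {d : R}
    (hd : d * d = 0) : (d + star d) * (d + star d) = d * star d + star d * d := by
  have hd' : star d * star d = 0 := by rw [← star_mul, hd, star_zero]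
  rw [mul_add, add_mul, add_mul, hd, hd', zero_add, add_zero, add_comm]

section CFC

variable {A : Type*} [Ring A] [StarRing A] [Algebra ℝ A] [TopologicalSpace A]
  [ContinuousFunctionalCalculus ℝ A IsSelfAdjoint]

theorem mul_cfc_inv_sqrt_mul_self {a : A} (ha : IsSelfAdjoint a)
    (hpos : ∀ x ∈ spectrum ℝ a, 0 < x) :
    a * (cfc (fun s : ℝ => (√s)⁻¹) a * cfc (fun s : ℝ => (√s)⁻¹) a) = 1 := by
  have hcont : ContinuousOn (fun s : ℝ => (√s)⁻¹) (spectrum ℝ a) := fun s hs =>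
    (Real.continuous_sqrt.continuousAt.inv₀ (Real.sqrt_pos.2 (hpos s hs)).ne').continuousWithinAt
  rw [← cfc_mul _ _ a, ← cfc_one ℝ a]
  nth_rw 1 [← cfc_id' ℝ a]
  rw [← cfc_mul _ _ a]
  refine cfc_congr fun s hs => ?_
  simp only [Pi.one_apply]
  rw [← mul_inv, Real.mul_self_sqrt (hpos s hs).le, mul_inv_cancel₀ (hpos s hs).ne']

end CFC

section Projection

variable {𝕜 E : Type*} [RCLike 𝕜] [NormedAddCommGroup E] [InnerProductSpace 𝕜 E]
  {K : Submodule 𝕜 E} [K.HasOrthogonalProjection]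

theorem mul_starProjection_eq_zero {A : E →L[𝕜] E} (hAK : ∀ x ∈ K, A x = 0) :
    A * K.starProjection = 0 :=
  ext fun x => hAK _ (K.starProjection_apply_mem x)

variable [CompleteSpace E]

theorem inner_apply_self_eq_inner_starProjection_orthogonal {Δ : E →L[𝕜] E}
    (hΔ : IsSelfAdjoint Δ) (hΔK : ∀ x ∈ K, Δ x = 0) (x : E) :
    ⟪Δ x, x⟫_𝕜 = ⟪Δ (Kᗮ.starProjection x), Kᗮ.starProjection x⟫_𝕜 := by
  set y := Kᗮ.starProjection x
  have hx : x = K.starProjection x + y := (K.starProjection_add_starProjection_orthogonal x).symm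
  have hΔx : Δ x = Δ y := by
    rw [hx, map_add, hΔK _ (K.starProjection_apply_mem x), zero_add]
  have hΔPx : ⟪Δ y, K.starProjection x⟫_𝕜 = 0 := by
    rw [← hΔ.adjoint_eq, adjoint_inner_left, hΔK _ (K.starProjection_apply_mem x), inner_zero_right]
  rw [hΔx]
  nth_rw 1 [hx]
  rw [inner_add_right, hΔPx, zero_add]

theorem norm_sq_le_re_inner_starProjection_add_apply {Δ : E →L[𝕜] E}
    (hΔ : IsSelfAdjoint Δ) (hΔK : ∀ x ∈ K, Δ x = 0)
    (hcoer : ∀ y ∈ Kᗮ, ‖y‖ ^ 2 ≤ re ⟪Δ y, y⟫_𝕜) (x : E) :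
    ‖x‖ ^ 2 ≤ re ⟪(K.starProjection + Δ) x, x⟫_𝕜 := by
  rw [add_apply, inner_add_left, map_add, K.re_inner_starProjection_eq_normSq,
    inner_apply_self_eq_inner_starProjection_orthogonal hΔ hΔK,
    K.norm_sq_eq_add_norm_sq_starProjection x, K.starProjection_apply, Submodule.coe_norm]
  linarith [hcoer _ (Kᗮ.starProjection_apply_mem x)]

theorem starProjection_mul_eq_zero {A : E →L[𝕜] E} (hA : IsSelfAdjoint A)
    (hAK : ∀ x ∈ K, A x = 0) : K.starProjection * A = 0 := by
  simpa only [star_mul, hA.star_eq, (isSelfAdjoint_starProjection K).star_eq, star_zero] using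
    congrArg star (mul_starProjection_eq_zero hAK)

theorem IsSelfAdjoint.apply_eq_zero_of_mul_self_apply_eq_zero {A : E →L[𝕜] E}
    (hA : IsSelfAdjoint A) {x : E} (h : (A * A) x = 0) : A x = 0 := by
  have : ‖A x‖ ^ 2 = 0 := by
    rw [apply_norm_sq_eq_inner_adjoint_left, hA.adjoint_eq, ← mul_def, h, inner_zero_left,
      map_zero]
  simpa using this

theorem one_le_of_norm_sq_le_re_inner {T : E →L[𝕜] E} (hT : IsSelfAdjoint T)
    (h : ∀ x, ‖x‖ ^ 2 ≤ re ⟪T x, x⟫_𝕜) : 1 ≤ T := by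
  rw [le_def, isPositive_def']
  refine ⟨hT.sub (.one _), fun x => ?_⟩
  rw [reApplyInnerSelf_apply, sub_apply, one_apply_eq_self, inner_sub_left, map_sub,
    inner_self_eq_norm_sq]
  linarith [h x]

end Projection

/-- If `P` is the rank-one projection onto a unit vector `v`, `d² = 0`, `δ = d*`, and the
Laplacian `Δ = dδ + δd` kills `v` and is bounded below by `I` on the orthogonal complement of
`v`, then `P + Δ ≥ I` is invertible and `F = (d + δ)(P + Δ)^{-1/2}` is self-adjoint with
`F² = 1 − P`. -/
theorem stmt12 {H : Type*} [NormedAddCommGroup H] [InnerProductSpace ℂ H] [CompleteSpace H]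
    (v : H) (hv : ‖v‖ = 1)
    (P : H →L[ℂ] H) (hP : ∀ x : H, P x = (inner ℂ v x : ℂ) • v)
    (d δ : H →L[ℂ] H) (hd2 : d.comp d = 0) (hδ : δ = ContinuousLinearMap.adjoint d)
    (hΔv : (d.comp δ + δ.comp d) v = 0)
    (hΔge : ∀ x : H, (inner ℂ x v : ℂ) = 0 →
      ‖x‖ ^ 2 ≤ (inner ℂ ((d.comp δ + δ.comp d) x) x : ℂ).re) :
    (∀ x : H, ‖x‖ ^ 2 ≤ (inner ℂ ((P + d.comp δ + δ.comp d) x) x : ℂ).re) ∧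
    IsUnit (P + d.comp δ + δ.comp d) ∧
    IsSelfAdjoint ((d + δ) * cfc (fun s : ℝ => (Real.sqrt s)⁻¹) (P + d.comp δ + δ.comp d)) ∧
    ((d + δ) * cfc (fun s : ℝ => (Real.sqrt s)⁻¹) (P + d.comp δ + δ.comp d)) *
      ((d + δ) * cfc (fun s : ℝ => (Real.sqrt s)⁻¹) (P + d.comp δ + δ.comp d)) = 1 - P := by
  rw [← star_eq_adjoint] at hδ
  subst hδ
  set A := d + star d
  have hA : IsSelfAdjoint A := IsSelfAdjoint.add_star_self d
  have hAA : A * A = d.comp (star d) + (star d).comp d := add_star_mul_self_of_mul_self_eq_zero hd2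
  have hAK : ∀ x ∈ ℂ ∙ v, A x = 0 := fun x hx =>
    (Submodule.span_singleton_le_iff_mem v A.ker).2
      (hA.apply_eq_zero_of_mul_self_apply_eq_zero (hAA ▸ hΔv)) hx
  have hPK : P = (ℂ ∙ v).starProjection :=
    ext fun x => (hP x).trans (Submodule.starProjection_unit_singleton ℂ hv x).symm
  have hAA_sa : IsSelfAdjoint (A * A) := (hA.commute_iff hA).1 (.refl A)
  rw [add_assoc, ← hAA, hPK]
  set T := (ℂ ∙ v).starProjection + A * A
  have hcoer : ∀ x, ‖x‖ ^ 2 ≤ re ⟪T x, x⟫_ℂ :=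
    norm_sq_le_re_inner_starProjection_add_apply hAA_sa
      (fun x hx => (congrArg A (hAK x hx)).trans (map_zero A))
      (fun y hy => hAA ▸ hΔge y (Submodule.mem_orthogonal_singleton_iff_inner_left.1 hy))
  have hTsa : IsSelfAdjoint T := (isSelfAdjoint_starProjection _).add hAA_sa
  have hspec : ∀ s ∈ spectrum ℝ T, 0 < s := fun s hs =>
    one_pos.trans_le ((CFC.one_le_iff T).1 (one_le_of_norm_sq_le_re_inner hTsa hcoer) s hs)
  have hPA : (ℂ ∙ v).starProjection * A = 0 := starProjection_mul_eq_zero hA hAK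
  have hAP : Commute A (ℂ ∙ v).starProjection := (mul_starProjection_eq_zero hAK).trans hPA.symm
  have hAT : Commute A T := hAP.add_right ((Commute.refl A).mul_right (.refl A))
  have hAS : Commute A (cfc (fun s : ℝ => (√s)⁻¹) T) := (hAT.symm.cfc_real _).symm
  refine ⟨hcoer, spectrum.isUnit_of_zero_notMem ℝ fun h0 => (hspec 0 h0).false,
    (hA.commute_iff (cfc_predicate _ _)).1 hAS,
    mul_self_eq_one_sub_of_commute hAS (add_sub_cancel_left _ _).symm
      (mul_cfc_inv_sqrt_mul_self hTsa hspec) ?_⟩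
  rw [mul_add, (Submodule.isIdempotentElem_starProjection _).eq, ← mul_assoc, hPA, zero_mul,
    add_zero]
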